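/- arXiv:2001.07490 — 4 statements merged into one kernel-verified Lean document; each statement's English description precedes it below -/
import Mathlib

section
/- In the peeling-decoder model on an (L_A+1) × (L_B+1) grid with L_A, L_B ≥ 1, a set of 4 erased cells is undecodable if and only if the 4 cells form the corners of a combinatorial rectangle (i.e., occupy exactly two rows and exactly two columns, with all four row-column intersections erased). -/
/-- A cell `c` of an erasure pattern `E` is peelable if it belongs to `E` and is the
unique cell of `E` in its row, or the unique cell of `E` in its column. -/
def Peelable {α β : Type*} [DecidableEq α] [DecidableEq β]
    (E : Finset (α × β)) (c : α × β) : Prop :=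
  c ∈ E ∧ ((∀ d ∈ E, d.1 = c.1 → d = c) ∨ (∀ d ∈ E, d.2 = c.2 → d = c))

/-- An erasure pattern is decodable if iterated peeling empties it. -/
inductive PeelDecodable {α β : Type*} [DecidableEq α] [DecidableEq β] :
    Finset (α × β) → Prop
  | empty : PeelDecodable ∅
  | peel (E : Finset (α × β)) (c : α × β) :
      Peelable E c → PeelDecodable (E.erase c) → PeelDecodable E

/-- A 4-set of cells forming the corners of a combinatorial rectangle. -/
def IsRectangle {α β : Type*} [DecidableEq α] [DecidableEq β]
    (E : Finset (α × β)) : Prop :=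
  ∃ i₁ i₂ : α, ∃ j₁ j₂ : β, i₁ ≠ i₂ ∧ j₁ ≠ j₂ ∧
    E = {(i₁, j₁), (i₁, j₂), (i₂, j₁), (i₂, j₂)}

lemma rect_card {α β : Type*} [DecidableEq α] [DecidableEq β]
    {E : Finset (α × β)} (h : IsRectangle E) : E.card = 4 := by
  obtain ⟨i₁, i₂, j₁, j₂, hi, hj, rfl⟩ := h
  rw [Finset.card_insert_of_notMem (by simp [Prod.ext_iff, hi, hj]),
      Finset.card_insert_of_notMem (by simp [Prod.ext_iff, hi, hj]),
      Finset.card_insert_of_notMem (by simp [Prod.ext_iff, hi, hj]),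
      Finset.card_singleton]

lemma rect_no_peel {α β : Type*} [DecidableEq α] [DecidableEq β]
    {E : Finset (α × β)} (h : IsRectangle E) (c : α × β) : ¬ Peelable E c := by
  obtain ⟨i₁, i₂, j₁, j₂, hi, hj, rfl⟩ := h
  rintro ⟨hmem, hpeel⟩
  simp only [Finset.mem_insert, Finset.mem_singleton] at hmem
  rcases hmem with rfl | rfl | rfl | rfl <;> rcases hpeel with h | h
  · have := h (i₁, j₂) (by simp) rfl; simp [Prod.ext_iff] at this; exact hj this.symm
  · have := h (i₂, j₁) (by simp) rfl; simp [Prod.ext_iff] at this; exact hi this.symm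
  · have := h (i₁, j₁) (by simp) rfl; simp [Prod.ext_iff] at this; exact hj this
  · have := h (i₂, j₂) (by simp) rfl; simp [Prod.ext_iff] at this; exact hi this.symm
  · have := h (i₂, j₂) (by simp) rfl; simp [Prod.ext_iff] at this; exact hj this.symm
  · have := h (i₁, j₁) (by simp) rfl; simp [Prod.ext_iff] at this; exact hi this
  · have := h (i₂, j₁) (by simp) rfl; simp [Prod.ext_iff] at this; exact hj this
  · have := h (i₁, j₂) (by simp) rfl; simp [Prod.ext_iff] at this; exact hi this

lemma key_rect {α β : Type*} [DecidableEq α] [DecidableEq β] {E : Finset (α × β)}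
    (hcard : E.card ≤ 4) (hne : E.Nonempty)
    (hnp : ∀ c ∈ E, ¬ Peelable E c) : IsRectangle E := by
  have hmate : ∀ c ∈ E, (∃ d ∈ E, d ≠ c ∧ d.1 = c.1) ∧ (∃ d ∈ E, d ≠ c ∧ d.2 = c.2) := by
    intro c hc
    have h := hnp c hc
    unfold Peelable at h
    push_neg at h
    obtain ⟨⟨d₁, hd₁, h₁, h₁'⟩, d₂, hd₂, h₂, h₂'⟩ := h hc
    exact ⟨⟨d₁, hd₁, h₁', h₁⟩, d₂, hd₂, h₂', h₂⟩
  obtain ⟨c, hc⟩ := hne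
  obtain ⟨⟨c', hc', hne1, hrow⟩, c₂, hc₂, hne2, hcol⟩ := hmate c hc
  obtain ⟨-, c₃, hc₃, hne3, hcol'⟩ := hmate c' hc'
  have h12 : c'.2 ≠ c.2 := fun h => hne1 (Prod.ext hrow h)
  have h21 : c₂.1 ≠ c.1 := fun h => hne2 (Prod.ext h hcol)
  have h3c : c₃ ≠ c := fun h => h12 (by rw [← hcol', h])
  have h32 : c₃ ≠ c₂ := fun h => h12 (by rw [← hcol', h, hcol])
  have h12' : c' ≠ c₂ := fun h => h12 (by rw [h, hcol])
  -- the four-element set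
  have hsub : ({c, c', c₂, c₃} : Finset (α × β)) ⊆ E := by
    intro x hx
    simp only [Finset.mem_insert, Finset.mem_singleton] at hx
    rcases hx with rfl | rfl | rfl | rfl <;> assumption
  have hScard : ({c, c', c₂, c₃} : Finset (α × β)).card = 4 := by
    rw [Finset.card_insert_of_notMem (by simp [hne1.symm, hne2.symm, h3c.symm]),
        Finset.card_insert_of_notMem (by simp [h12', hne3.symm]),
        Finset.card_insert_of_notMem (by simp [h32.symm]),
        Finset.card_singleton]
  have hEeq : E = ({c, c', c₂, c₃} : Finset (α × β)) :=
    (Finset.eq_of_subset_of_card_le hsub (hScard ▸ hcard)).symm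
  -- row mate of c₂ forces c₃.1 = c₂.1
  obtain ⟨d, hd, hdne, hdrow⟩ := (hmate c₂ hc₂).1
  rw [hEeq] at hd
  simp only [Finset.mem_insert, Finset.mem_singleton] at hd
  have h31 : c₃.1 = c₂.1 := by
    rcases hd with h | h | h | h
    · exact absurd (by rw [← h]; exact hdrow) (Ne.symm h21)
    · exact absurd (by rw [← hrow, ← h]; exact hdrow) (Ne.symm h21)
    · exact absurd h hdne
    · rw [← h]; exact hdrow
  refine ⟨c.1, c₂.1, c.2, c'.2, Ne.symm h21, Ne.symm h12, ?_⟩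
  have e2 : c' = (c.1, c'.2) := Prod.ext hrow rfl
  have e3 : c₂ = (c₂.1, c.2) := Prod.ext rfl hcol
  have e4 : c₃ = (c₂.1, c'.2) := Prod.ext h31 hcol'
  rw [hEeq, ← e2, ← e3, ← e4]

lemma decodable_of_not_rect {α β : Type*} [DecidableEq α] [DecidableEq β] :
    ∀ n (E : Finset (α × β)), E.card ≤ n → E.card ≤ 4 → ¬ IsRectangle E → PeelDecodable E := by
  intro n
  induction n with
  | zero =>
    intro E h _ _
    rw [Nat.le_zero, Finset.card_eq_zero] at h
    subst h; exact .empty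
  | succ n ih =>
    intro E hn h4 hrect
    rcases E.eq_empty_or_nonempty with rfl | hne
    · exact .empty
    · have hpe : ∃ c ∈ E, Peelable E c := by
        by_contra hcon
        push_neg at hcon
        exact hrect (key_rect h4 hne hcon)
      obtain ⟨c, hc, hp⟩ := hpe
      have hec : (E.erase c).card = E.card - 1 := Finset.card_erase_of_mem hc
      refine .peel E c hp (ih _ (by omega) (by omega) ?_)
      intro hr
      have := rect_card hr
      omega

/-- A 4-set of erased cells is undecodable iff it forms the corners of a
combinatorial rectangle. -/
theorem undecodable_four_iff_rectangle (LA LB : ℕ) (hA : 1 ≤ LA) (hB : 1 ≤ LB)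
    (E : Finset (Fin (LA + 1) × Fin (LB + 1))) (hE : E.card = 4) :
    ¬ PeelDecodable E ↔ IsRectangle E := by
  constructor
  · intro h
    by_contra hr
    exact h (decodable_of_not_rect 4 E (by omega) (by omega) hr)
  · intro hr hdec
    cases hdec with
    | empty => simp at hE
    | peel E c hp _ => exact rect_no_peel hr c hp
end

section
/- The number of undecodable erasure sets of size 4 in the (L_A+1) × (L_B+1) grid peeling model equals C(L_A+1, 2) · C(L_B+1, 2). -/
section Aux

variable {α β : Type*} [DecidableEq α] [DecidableEq β]

/-- Any nonempty set of at most three cells has a peelable cell. -/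
lemma exists_peelable_of_card_le_three (E : Finset (α × β)) (hne : E.Nonempty)
    (h : E.card ≤ 3) : ∃ c, Peelable E c := by
  by_contra hno
  push_neg at hno
  obtain ⟨c, hc⟩ := hne
  -- c not peelable: it has a distinct row-mate d
  have hcnp := hno c
  rw [Peelable] at hcnp
  push_neg at hcnp
  obtain ⟨⟨d, hd, hd1, hdc⟩, e, he, he2, hec⟩ := hcnp hc
  have hd2 : d.2 ≠ c.2 := fun h2 => hdc (Prod.ext hd1 h2)
  have he1 : e.1 ≠ c.1 := fun h1 => hec (Prod.ext h1 he2)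
  -- d not peelable: it has a distinct column-mate f
  have hdnp := hno d
  rw [Peelable] at hdnp
  push_neg at hdnp
  obtain ⟨_, f, hf, hf2, hfd⟩ := hdnp hd
  have hf1 : f.1 ≠ d.1 := fun h1 => hfd (Prod.ext h1 hf2)
  -- c, d, e, f are four distinct cells of E
  have hfc : f ≠ c := fun h => hd2 (by rw [← hf2, h])
  have hed : e ≠ d := fun h => hd2 (by rw [← h, he2])
  have hfe : f ≠ e := fun h => hd2 (by rw [← hf2, h, he2])
  have hsub : ({c, d, e, f} : Finset (α × β)) ⊆ E := by
    intro x hx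
    simp only [Finset.mem_insert, Finset.mem_singleton] at hx
    rcases hx with rfl | rfl | rfl | rfl <;> assumption
  have hcard : ({c, d, e, f} : Finset (α × β)).card = 4 := by
    rw [Finset.card_insert_of_notMem, Finset.card_insert_of_notMem,
      Finset.card_insert_of_notMem, Finset.card_singleton]
    · simp [Ne.symm hfe]
    · simp [Ne.symm hed, Ne.symm hfd]
    · simp [Ne.symm hdc, Ne.symm hec, Ne.symm hfc]
  have := Finset.card_le_card hsub
  omega

/-- Any set of at most three cells is decodable. -/
lemma decodable_of_card_le_three (E : Finset (α × β)) (h : E.card ≤ 3) :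
    PeelDecodable E := by
  induction E using Finset.strongInduction with
  | _ E ih =>
    rcases E.eq_empty_or_nonempty with rfl | hne
    · exact PeelDecodable.empty
    · obtain ⟨c, hcp⟩ := exists_peelable_of_card_le_three E hne h
      exact PeelDecodable.peel E c hcp
        (ih _ (Finset.erase_ssubset hcp.1)
          (le_trans (Finset.card_le_card (Finset.erase_subset _ _)) h))

/-- A 4-set with no peelable cell is a rectangle. -/
lemma rect_of_stuck (E : Finset (α × β)) (h4 : E.card = 4)
    (hno : ∀ c, ¬ Peelable E c) : IsRectangle E := by
  have hne : E.Nonempty := Finset.card_pos.mp (by omega)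
  obtain ⟨c, hc⟩ := hne
  have hcnp := hno c
  rw [Peelable] at hcnp
  push_neg at hcnp
  obtain ⟨⟨d, hd, hd1, hdc⟩, e, he, he2, hec⟩ := hcnp hc
  have hd2 : d.2 ≠ c.2 := fun h2 => hdc (Prod.ext hd1 h2)
  have he1 : e.1 ≠ c.1 := fun h1 => hec (Prod.ext h1 he2)
  have hdnp := hno d
  rw [Peelable] at hdnp
  push_neg at hdnp
  obtain ⟨_, f, hf, hf2, hfd⟩ := hdnp hd
  have hf1 : f.1 ≠ d.1 := fun h1 => hfd (Prod.ext h1 hf2)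
  have hfc : f ≠ c := fun h => hd2 (by rw [← hf2, h])
  have hed : e ≠ d := fun h => hd2 (by rw [← h, he2])
  have hfe : f ≠ e := fun h => hd2 (by rw [← hf2, h, he2])
  have hsub : ({c, d, e, f} : Finset (α × β)) ⊆ E := by
    intro x hx
    simp only [Finset.mem_insert, Finset.mem_singleton] at hx
    rcases hx with rfl | rfl | rfl | rfl <;> assumption
  have hcard : ({c, d, e, f} : Finset (α × β)).card = 4 := by
    rw [Finset.card_insert_of_notMem, Finset.card_insert_of_notMem,
      Finset.card_insert_of_notMem, Finset.card_singleton]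
    · simp [Ne.symm hfe]
    · simp [Ne.symm hed, Ne.symm hfd]
    · simp [Ne.symm hdc, Ne.symm hec, Ne.symm hfc]
  have hE : E = {c, d, e, f} := (Finset.eq_of_subset_of_card_le hsub (by omega)).symm
  -- e has a row-mate, which must be f, forcing f.1 = e.1
  have henp := hno e
  rw [Peelable] at henp
  push_neg at henp
  obtain ⟨⟨g, hg, hg1, hge⟩, _⟩ := henp he
  have hgc : g ≠ c := fun h => he1 (by rw [← hg1, h])
  have hgd : g ≠ d := fun h => he1 (by rw [← hg1, h, hd1])
  have hgf : g = f := by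
    rw [hE] at hg
    simp only [Finset.mem_insert, Finset.mem_singleton] at hg
    rcases hg with rfl | rfl | rfl | rfl
    · exact absurd rfl hgc
    · exact absurd rfl hgd
    · exact absurd rfl hge
    · rfl
  have hfe1 : f.1 = e.1 := by rw [← hgf, hg1]
  refine ⟨c.1, e.1, c.2, d.2, Ne.symm he1, Ne.symm hd2, ?_⟩
  have h1 : ((c.1, c.2) : α × β) = c := rfl
  have h2 : ((c.1, d.2) : α × β) = d := Prod.ext hd1.symm rfl
  have h3 : ((e.1, c.2) : α × β) = e := Prod.ext rfl he2.symm
  have h4 : ((e.1, d.2) : α × β) = f := Prod.ext hfe1.symm hf2.symm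
  rw [hE, h1, h2, h3, h4]

lemma rect_card_prod (E : Finset (α × β)) :
    IsRectangle E ↔ ∃ A : Finset α, ∃ B : Finset β,
      A.card = 2 ∧ B.card = 2 ∧ E = A ×ˢ B := by
  constructor
  · rintro ⟨i₁, i₂, j₁, j₂, hi, hj, rfl⟩
    refine ⟨{i₁, i₂}, {j₁, j₂}, by simp [hi], by simp [hj], ?_⟩
    ext ⟨a, b⟩
    simp only [Finset.mem_insert, Finset.mem_singleton, Finset.mem_product, Prod.mk.injEq]
    tauto
  · rintro ⟨A, B, hA, hB, rfl⟩
    obtain ⟨i₁, i₂, hi, rfl⟩ := Finset.card_eq_two.mp hA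
    obtain ⟨j₁, j₂, hj, rfl⟩ := Finset.card_eq_two.mp hB
    refine ⟨i₁, i₂, j₁, j₂, hi, hj, ?_⟩
    ext ⟨a, b⟩
    simp only [Finset.mem_insert, Finset.mem_singleton, Finset.mem_product, Prod.mk.injEq]
    tauto

lemma rect_not_peelable (E : Finset (α × β)) (hR : IsRectangle E) (c : α × β) :
    ¬ Peelable E c := by
  obtain ⟨i₁, i₂, j₁, j₂, hi, hj, rfl⟩ := hR
  rintro ⟨hc, hrow | hcol⟩
  · simp only [Finset.mem_insert, Finset.mem_singleton] at hc
    rcases hc with rfl | rfl | rfl | rfl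
    · have := hrow (i₁, j₂) (by simp) rfl
      exact hj (congrArg Prod.snd this).symm
    · have := hrow (i₁, j₁) (by simp) rfl
      exact hj (congrArg Prod.snd this)
    · have := hrow (i₂, j₂) (by simp) rfl
      exact hj (congrArg Prod.snd this).symm
    · have := hrow (i₂, j₁) (by simp) rfl
      exact hj (congrArg Prod.snd this)
  · simp only [Finset.mem_insert, Finset.mem_singleton] at hc
    rcases hc with rfl | rfl | rfl | rfl
    · have := hcol (i₂, j₁) (by simp) rfl
      exact hi (congrArg Prod.fst this).symm
    · have := hcol (i₂, j₂) (by simp) rfl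
      exact hi (congrArg Prod.fst this).symm
    · have := hcol (i₁, j₁) (by simp) rfl
      exact hi (congrArg Prod.fst this)
    · have := hcol (i₁, j₂) (by simp) rfl
      exact hi (congrArg Prod.fst this)

lemma rect_card_four (E : Finset (α × β)) (hR : IsRectangle E) : E.card = 4 := by
  obtain ⟨A, B, hA, hB, rfl⟩ := (rect_card_prod E).mp hR
  rw [Finset.card_product, hA, hB]

/-- A 4-set is undecodable iff it is a rectangle. -/
lemma undecodable_iff_rect (E : Finset (α × β)) :
    (E.card = 4 ∧ ¬ PeelDecodable E) ↔ IsRectangle E := by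
  constructor
  · rintro ⟨h4, hnd⟩
    by_contra hR
    apply hnd
    have hpe : ∃ c, Peelable E c := by
      by_contra hno
      push_neg at hno
      exact hR (rect_of_stuck E h4 hno)
    obtain ⟨c, hcp⟩ := hpe
    refine PeelDecodable.peel E c hcp (decodable_of_card_le_three _ ?_)
    rw [Finset.card_erase_of_mem hcp.1, h4]
  · intro hR
    refine ⟨rect_card_four E hR, fun hd => ?_⟩
    cases hd with
    | empty =>
      have := rect_card_four _ hR
      simp at this
    | peel E c hp _ => exact rect_not_peelable E hR c hp

end Aux

open scoped Classical in
/-- The number of undecodable erasure sets of size 4 in the `(L_A+1) × (L_B+1)` grid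
equals `C(L_A+1, 2) · C(L_B+1, 2)`. -/
theorem card_undecodable_four_sets (LA LB : ℕ) :
    (Finset.univ.filter
        (fun E : Finset (Fin (LA + 1) × Fin (LB + 1)) =>
          E.card = 4 ∧ ¬ PeelDecodable E)).card =
      (LA + 1).choose 2 * (LB + 1).choose 2 := by
  classical
  have hfilter : (Finset.univ.filter
      (fun E : Finset (Fin (LA + 1) × Fin (LB + 1)) =>
        E.card = 4 ∧ ¬ PeelDecodable E)) =
      ((Finset.univ.powersetCard 2 ×ˢ Finset.univ.powersetCard 2 :
          Finset (Finset (Fin (LA + 1)) × Finset (Fin (LB + 1)))).image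
        (fun p => p.1 ×ˢ p.2)) := by
    ext E
    simp only [Finset.mem_filter, Finset.mem_univ, true_and, Finset.mem_image,
      Finset.mem_product, Finset.mem_powersetCard_univ]
    rw [undecodable_iff_rect, rect_card_prod]
    constructor
    · rintro ⟨A, B, hA, hB, rfl⟩
      exact ⟨(A, B), ⟨hA, hB⟩, rfl⟩
    · rintro ⟨⟨A, B⟩, ⟨hA, hB⟩, rfl⟩
      exact ⟨A, B, hA, hB, rfl⟩
  rw [hfilter, Finset.card_image_of_injOn, Finset.card_product,
    Finset.card_powersetCard, Finset.card_powersetCard, Finset.card_univ,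
    Finset.card_univ, Fintype.card_fin, Fintype.card_fin]
  rintro ⟨A, B⟩ hp ⟨A', B'⟩ hq h
  simp only [Finset.coe_product, Set.mem_prod, Finset.mem_coe,
    Finset.mem_powersetCard_univ] at hp hq
  have hBne : B.Nonempty := Finset.card_pos.mp (by omega)
  have hAne : A.Nonempty := Finset.card_pos.mp (by omega)
  dsimp only at h
  have hBne' : B'.Nonempty := Finset.card_pos.mp (by omega)
  have hAne' : A'.Nonempty := Finset.card_pos.mp (by omega)
  have h1 : A = A' := by
    rw [← Finset.product_image_fst (s := A) hBne,
      ← Finset.product_image_fst (s := A') hBne', h]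
  have h2 : B = B' := by
    rw [← Finset.product_image_snd (t := B) hAne,
      ← Finset.product_image_snd (t := B') hAne', h]
  exact Prod.ext h1 h2
end

section
/- In the peeling model on an (L_A+1) × (L_B+1) grid with n = (L_A+1)(L_B+1), every undecodable set of size 5 contains an undecodable 4-set (a rectangle), and hence the number of undecodable 5-sets is at most C(L_A+1,2)·C(L_B+1,2)·(n-4). -/
section Aux

variable {α β : Type*} [DecidableEq α] [DecidableEq β]

lemma stopping_not_decodable {E : Finset (α × β)} (hne : E.Nonempty)
    (h : ∀ c, ¬ Peelable E c) : ¬ PeelDecodable E := by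
  intro hd
  cases hd with
  | empty => exact hne.ne_empty rfl
  | peel E c hp _ => exact h c hp

lemma exists_stopping (E : Finset (α × β)) :
    ¬ PeelDecodable E → ∃ F, F ⊆ E ∧ F.Nonempty ∧ ∀ c, ¬ Peelable F c := by
  induction E using Finset.strongInduction with
  | _ E ih =>
    intro h
    rcases E.eq_empty_or_nonempty with rfl | hne
    · exact absurd PeelDecodable.empty h
    by_cases hp : ∃ c, Peelable E c
    · obtain ⟨c, hc⟩ := hp
      have hss : E.erase c ⊂ E := Finset.erase_ssubset hc.1
      have hnd : ¬ PeelDecodable (E.erase c) := fun hd => h (PeelDecodable.peel E c hc hd)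
      obtain ⟨F, h1, h2, h3⟩ := ih _ hss hnd
      exact ⟨F, h1.trans (Finset.erase_subset _ _), h2, h3⟩
    · push_neg at hp
      exact ⟨E, Finset.Subset.refl _, hne, hp⟩

lemma mate {F : Finset (α × β)} (h : ∀ c, ¬ Peelable F c) {c : α × β} (hc : c ∈ F) :
    (∃ d ∈ F, d.1 = c.1 ∧ d ≠ c) ∧ (∃ e ∈ F, e.2 = c.2 ∧ e ≠ c) := by
  have h1 := h c
  unfold Peelable at h1
  push_neg at h1
  exact h1 hc

lemma prod_two_two (i₁ i₂ : α) (j₁ j₂ : β) :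
    ({i₁, i₂} : Finset α) ×ˢ ({j₁, j₂} : Finset β) =
      ({(i₁, j₁), (i₁, j₂), (i₂, j₁), (i₂, j₂)} : Finset (α × β)) := by
  ext ⟨a, b⟩
  simp only [Finset.mem_product, Finset.mem_insert, Finset.mem_singleton, Prod.mk.injEq]
  tauto

lemma rect_not_decodable {i₁ i₂ : α} {j₁ j₂ : β} (h1 : i₁ ≠ i₂) (h2 : j₁ ≠ j₂) :
    ¬ PeelDecodable (({i₁, i₂} : Finset α) ×ˢ ({j₁, j₂} : Finset β)) := by
  apply stopping_not_decodable ⟨(i₁, j₁), by simp⟩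
  rintro c ⟨hc, hor⟩
  rw [Finset.mem_product] at hc
  rcases hor with hrow | hcol
  · have e1 := hrow (c.1, j₁) (Finset.mem_product.mpr ⟨hc.1, by simp⟩) rfl
    have e2 := hrow (c.1, j₂) (Finset.mem_product.mpr ⟨hc.1, by simp⟩) rfl
    exact h2 (congrArg Prod.snd (e1.trans e2.symm))
  · have e1 := hcol (i₁, c.2) (Finset.mem_product.mpr ⟨by simp, hc.2⟩) rfl
    have e2 := hcol (i₂, c.2) (Finset.mem_product.mpr ⟨by simp, hc.2⟩) rfl
    exact h1 (congrArg Prod.fst (e1.trans e2.symm))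

lemma stopping_structure {F : Finset (α × β)} (hne : F.Nonempty)
    (hcard : F.card ≤ 5) (h : ∀ c, ¬ Peelable F c) :
    ∃ i₁ i₂ j₁ j₂, i₁ ≠ i₂ ∧ j₁ ≠ j₂ ∧
      F = ({i₁, i₂} : Finset α) ×ˢ ({j₁, j₂} : Finset β) := by
  set R := F.image Prod.fst with hR
  set C := F.image Prod.snd with hC
  have hfibR : ∀ a ∈ R, 2 ≤ (F.filter fun x => x.1 = a).card := by
    intro a ha
    obtain ⟨c, hc, rfl⟩ := Finset.mem_image.mp ha
    obtain ⟨⟨d, hd, hd1, hd2⟩, -⟩ := mate h hc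
    exact Finset.one_lt_card.mpr ⟨d, by simp [hd, hd1], c, by simp [hc], hd2⟩
  have hfibC : ∀ b ∈ C, 2 ≤ (F.filter fun x => x.2 = b).card := by
    intro b hb
    obtain ⟨c, hc, rfl⟩ := Finset.mem_image.mp hb
    obtain ⟨-, ⟨e, he, he1, he2⟩⟩ := mate h hc
    exact Finset.one_lt_card.mpr ⟨e, by simp [he, he1], c, by simp [hc], he2⟩
  have h2R : 2 * R.card ≤ F.card := by
    rw [Finset.card_eq_sum_card_image Prod.fst F]
    calc 2 * R.card = ∑ _a ∈ R, 2 := by rw [Finset.sum_const, smul_eq_mul, mul_comm]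
      _ ≤ ∑ a ∈ R, (F.filter fun x => x.1 = a).card := Finset.sum_le_sum hfibR
  have h2C : 2 * C.card ≤ F.card := by
    rw [Finset.card_eq_sum_card_image Prod.snd F]
    calc 2 * C.card = ∑ _b ∈ C, 2 := by rw [Finset.sum_const, smul_eq_mul, mul_comm]
      _ ≤ ∑ b ∈ C, (F.filter fun x => x.2 = b).card := Finset.sum_le_sum hfibC
  obtain ⟨c0, hc0⟩ := hne
  have hRge : 1 < R.card := by
    obtain ⟨-, ⟨e, he, he1, he2⟩⟩ := mate h hc0
    have hne1 : e.1 ≠ c0.1 := fun hfst => he2 (Prod.ext hfst he1)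
    exact Finset.one_lt_card.mpr
      ⟨e.1, Finset.mem_image_of_mem _ he, c0.1, Finset.mem_image_of_mem _ hc0, hne1⟩
  have hCge : 1 < C.card := by
    obtain ⟨⟨d, hd, hd1, hd2⟩, -⟩ := mate h hc0
    have hne2 : d.2 ≠ c0.2 := fun hsnd => hd2 (Prod.ext hd1 hsnd)
    exact Finset.one_lt_card.mpr
      ⟨d.2, Finset.mem_image_of_mem _ hd, c0.2, Finset.mem_image_of_mem _ hc0, hne2⟩
  have hRcard : R.card = 2 := by omega
  have hCcard : C.card = 2 := by omega
  have hcover : ∀ c ∈ F, ∀ j ∈ C, (c.1, j) ∈ F := by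
    intro c hc j hj
    obtain ⟨⟨d, hd, hd1, hd2⟩, -⟩ := mate h hc
    have hne2 : d.2 ≠ c.2 := fun hsnd => hd2 (Prod.ext hd1 hsnd)
    have hsub : ({d.2, c.2} : Finset β) ⊆ C := by
      intro x hx
      rcases Finset.mem_insert.mp hx with rfl | hx
      · exact Finset.mem_image_of_mem _ hd
      · rw [Finset.mem_singleton.mp hx]
        exact Finset.mem_image_of_mem _ hc
    have hCeq : ({d.2, c.2} : Finset β) = C :=
      Finset.eq_of_subset_of_card_le hsub (by rw [hCcard, Finset.card_pair hne2])
    rw [← hCeq] at hj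
    rcases Finset.mem_insert.mp hj with rfl | hj
    · have : (c.1, d.2) = d := Prod.ext hd1.symm rfl
      rwa [this]
    · rw [Finset.mem_singleton.mp hj]
      simpa using hc
  have hFeq : F = R ×ˢ C := by
    apply Finset.Subset.antisymm
    · intro c hc
      exact Finset.mem_product.mpr ⟨Finset.mem_image_of_mem _ hc, Finset.mem_image_of_mem _ hc⟩
    · intro p hp
      rw [Finset.mem_product] at hp
      obtain ⟨c, hc, hc1⟩ := Finset.mem_image.mp hp.1
      have h' := hcover c hc p.2 hp.2
      rw [hc1] at h'
      simpa using h'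
  obtain ⟨i₁, i₂, hi, hRset⟩ := Finset.card_eq_two.mp hRcard
  obtain ⟨j₁, j₂, hj, hCset⟩ := Finset.card_eq_two.mp hCcard
  exact ⟨i₁, i₂, j₁, j₂, hi, hj, by rw [hFeq, hRset, hCset]⟩

/-- Master structural lemma: every undecodable 5-set is a rectangle plus one extra cell. -/
lemma master {E : Finset (α × β)} (h5 : E.card = 5) (hnd : ¬ PeelDecodable E) :
    ∃ i₁ i₂ j₁ j₂ x, i₁ ≠ i₂ ∧ j₁ ≠ j₂ ∧
      x ∉ ({i₁, i₂} : Finset α) ×ˢ ({j₁, j₂} : Finset β) ∧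
      E = insert x (({i₁, i₂} : Finset α) ×ˢ ({j₁, j₂} : Finset β)) := by
  obtain ⟨F, hFE, hFne, hstop⟩ := exists_stopping E hnd
  have hFle : F.card ≤ 5 := h5 ▸ Finset.card_le_card hFE
  obtain ⟨i₁, i₂, j₁, j₂, hi, hj, hFeq⟩ := stopping_structure hFne hFle hstop
  have hF4 : F.card = 4 := by
    rw [hFeq, Finset.card_product, Finset.card_pair hi, Finset.card_pair hj]
  have hsd : (E \ F).card = 1 := by
    rw [Finset.card_sdiff_of_subset hFE, h5, hF4]
  obtain ⟨x, hx⟩ := Finset.card_eq_one.mp hsd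
  have hxmem : x ∈ E \ F := hx ▸ Finset.mem_singleton_self x
  have hxE : x ∈ E := (Finset.mem_sdiff.mp hxmem).1
  have hxF : x ∉ F := (Finset.mem_sdiff.mp hxmem).2
  have hins : insert x F ⊆ E := Finset.insert_subset hxE hFE
  have hcardins : (insert x F).card = 5 := by
    rw [Finset.card_insert_of_notMem hxF, hF4]
  have hEeq : insert x F = E :=
    Finset.eq_of_subset_of_card_le hins (by rw [hcardins, h5])
  exact ⟨i₁, i₂, j₁, j₂, x, hi, hj, hFeq ▸ hxF, by rw [← hEeq, hFeq]⟩

end Aux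

open scoped Classical in
/-- Every undecodable 5-set contains a rectangle (an undecodable 4-set), and hence the
number of undecodable 5-sets is at most `C(L_A+1,2)·C(L_B+1,2)·(n-4)` where
`n = (L_A+1)(L_B+1)`. -/
theorem undecodable_five_sets (LA LB : ℕ) :
    (∀ E : Finset (Fin (LA + 1) × Fin (LB + 1)), E.card = 5 → ¬ PeelDecodable E →
        ∃ F ⊆ E, IsRectangle F ∧ F.card = 4 ∧ ¬ PeelDecodable F) ∧
      (Finset.univ.filter
          (fun E : Finset (Fin (LA + 1) × Fin (LB + 1)) =>
            E.card = 5 ∧ ¬ PeelDecodable E)).card ≤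
        (LA + 1).choose 2 * (LB + 1).choose 2 * ((LA + 1) * (LB + 1) - 4) := by
  constructor
  · -- part 1
    intro E h5 hnd
    obtain ⟨i₁, i₂, j₁, j₂, x, hi, hj, hxF, hEeq⟩ := master h5 hnd
    refine ⟨({i₁, i₂} : Finset (Fin (LA + 1))) ×ˢ ({j₁, j₂} : Finset (Fin (LB + 1))),
      ?_, ⟨i₁, i₂, j₁, j₂, hi, hj, prod_two_two i₁ i₂ j₁ j₂⟩, ?_, rect_not_decodable hi hj⟩
    · rw [hEeq]; exact Finset.subset_insert _ _
    · rw [Finset.card_product, Finset.card_pair hi, Finset.card_pair hj]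
  · -- part 2 : counting
    set S := Finset.univ.filter
      (fun E : Finset (Fin (LA + 1) × Fin (LB + 1)) =>
        E.card = 5 ∧ ¬ PeelDecodable E) with hS
    set A := (Finset.univ.powersetCard 2 : Finset (Finset (Fin (LA + 1)))) ×ˢ
      (Finset.univ.powersetCard 2 : Finset (Finset (Fin (LB + 1)))) with hA
    set T := A.sigma (fun p => Finset.univ \ p.1 ×ˢ p.2) with hT
    have key : ∀ E : Finset (Fin (LA + 1) × Fin (LB + 1)),
        ∃ p : (Finset (Fin (LA + 1)) × Finset (Fin (LB + 1))) ×
              (Fin (LA + 1) × Fin (LB + 1)),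
          E ∈ S → p.1.1.card = 2 ∧ p.1.2.card = 2 ∧ p.2 ∉ p.1.1 ×ˢ p.1.2 ∧
            E = insert p.2 (p.1.1 ×ˢ p.1.2) := by
      intro E
      by_cases hE : E ∈ S
      · obtain ⟨h5, hnd⟩ := (Finset.mem_filter.mp hE).2
        obtain ⟨i₁, i₂, j₁, j₂, x, hi, hj, hxF, hEeq⟩ := master h5 hnd
        exact ⟨(({i₁, i₂}, {j₁, j₂}), x), fun _ =>
          ⟨Finset.card_pair hi, Finset.card_pair hj, hxF, hEeq⟩⟩
      · exact ⟨((∅, ∅), (0, 0)), fun h => absurd h hE⟩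
    choose g hg using key
    have hmaps : ∀ E ∈ S, (⟨(g E).1, (g E).2⟩ :
        Σ _ : Finset (Fin (LA + 1)) × Finset (Fin (LB + 1)),
          Fin (LA + 1) × Fin (LB + 1)) ∈ T := by
      intro E hE
      obtain ⟨h1, h2, h3, -⟩ := hg E hE
      rw [hT, Finset.mem_sigma]
      constructor
      · rw [hA, Finset.mem_product]
        exact ⟨Finset.mem_powersetCard.mpr ⟨Finset.subset_univ _, h1⟩,
          Finset.mem_powersetCard.mpr ⟨Finset.subset_univ _, h2⟩⟩
      · exact Finset.mem_sdiff.mpr ⟨Finset.mem_univ _, h3⟩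
    have hinj : ∀ E₁ ∈ S, ∀ E₂ ∈ S,
        (⟨(g E₁).1, (g E₁).2⟩ : Σ _ : Finset (Fin (LA + 1)) × Finset (Fin (LB + 1)),
          Fin (LA + 1) × Fin (LB + 1)) = ⟨(g E₂).1, (g E₂).2⟩ → E₁ = E₂ := by
      intro E₁ h₁ E₂ h₂ heq
      obtain ⟨-, -, -, he₁⟩ := hg E₁ h₁
      obtain ⟨-, -, -, he₂⟩ := hg E₂ h₂
      have hfst : (g E₁).1 = (g E₂).1 := congrArg Sigma.fst heq
      have hsnd : (g E₁).2 = (g E₂).2 := by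
        have := (Sigma.mk.inj_iff.mp heq).2
        exact eq_of_heq this
      rw [he₁, he₂, hfst, hsnd]
    have hle : S.card ≤ T.card := Finset.card_le_card_of_injOn _ hmaps hinj
    have hTcard : T.card = (LA + 1).choose 2 * (LB + 1).choose 2 *
        ((LA + 1) * (LB + 1) - 4) := by
      rw [hT, Finset.card_sigma]
      have hconst : ∀ q ∈ A, (Finset.univ \ q.1 ×ˢ q.2).card =
          (LA + 1) * (LB + 1) - 4 := by
        intro q hq
        rw [hA, Finset.mem_product] at hq
        obtain ⟨hq1, hq2⟩ := hq
        have hc1 : q.1.card = 2 := (Finset.mem_powersetCard.mp hq1).2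
        have hc2 : q.2.card = 2 := (Finset.mem_powersetCard.mp hq2).2
        rw [Finset.card_sdiff_of_subset (Finset.subset_univ _), Finset.card_product, hc1, hc2]
        simp [Fintype.card_prod]
      rw [Finset.sum_congr rfl hconst, Finset.sum_const, smul_eq_mul]
      rw [hA, Finset.card_product, Finset.card_powersetCard, Finset.card_powersetCard]
      simp [mul_assoc]
    rw [← hTcard]
    exact hle
end

section
/- In the peeling model on an (L_A+1) × (L_B+1) grid with n = (L_A+1)(L_B+1), the number of undecodable erasure sets of size 6 is at most C(L_A+1,3)·C(L_B+1,3)·C(9,6) + C(L_A+1,2)·C(L_B+1,2)·C(n-4, 2). -/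
open Finset

section Stopping

set_option linter.unusedSectionVars false

variable {α β : Type*} [DecidableEq α] [DecidableEq β]

/-- A stopping set: every cell has another cell of the set in its row and
another in its column. -/
def IsStopping (S : Finset (α × β)) : Prop :=
  ∀ c ∈ S, (∃ d ∈ S, d ≠ c ∧ d.1 = c.1) ∧ (∃ d ∈ S, d ≠ c ∧ d.2 = c.2)

lemma exists_stopping_s16 (E : Finset (α × β)) (h : ¬ PeelDecodable E) :
    ∃ S, S ⊆ E ∧ S.Nonempty ∧ IsStopping S := by
  classical
  induction E using Finset.strongInduction with
  | _ E ih =>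
    by_cases hstop : IsStopping E
    · refine ⟨E, Finset.Subset.rfl, ?_, hstop⟩
      rcases E.eq_empty_or_nonempty with rfl | hne
      · exact absurd PeelDecodable.empty h
      · exact hne
    · rw [IsStopping] at hstop
      push_neg at hstop
      obtain ⟨c, hc, hnc⟩ := hstop
      have hp : Peelable E c := by
        refine ⟨hc, ?_⟩
        by_cases hrow : ∃ d ∈ E, d ≠ c ∧ d.1 = c.1
        · right
          intro d hd hd2
          by_contra hne
          exact (hnc hrow d hd hne) hd2
        · left
          intro d hd hd1
          by_contra hne
          exact hrow ⟨d, hd, hne, hd1⟩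
      have h2 : ¬ PeelDecodable (E.erase c) := fun hd => h (.peel E c hp hd)
      obtain ⟨S, hS, hne, hst⟩ := ih (E.erase c) (Finset.erase_ssubset hc) h2
      exact ⟨S, hS.trans (Finset.erase_subset _ _), hne, hst⟩

lemma two_le_fiber_fst {S : Finset (α × β)} (hs : IsStopping S) {i : α}
    (hi : i ∈ S.image Prod.fst) : 2 ≤ (S.filter (fun c => c.1 = i)).card := by
  obtain ⟨c, hc, rfl⟩ := mem_image.mp hi
  obtain ⟨⟨d, hd, hdc, hd1⟩, -⟩ := hs c hc
  exact Finset.one_lt_card.mpr ⟨d, by simp [hd, hd1], c, by simp [hc], hdc⟩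

lemma two_le_fiber_snd {S : Finset (α × β)} (hs : IsStopping S) {j : β}
    (hj : j ∈ S.image Prod.snd) : 2 ≤ (S.filter (fun c => c.2 = j)).card := by
  obtain ⟨c, hc, rfl⟩ := mem_image.mp hj
  obtain ⟨-, d, hd, hdc, hd2⟩ := hs c hc
  exact Finset.one_lt_card.mpr ⟨d, by simp [hd, hd2], c, by simp [hc], hdc⟩

lemma rows_le (S : Finset (α × β)) (hs : IsStopping S) :
    2 * (S.image Prod.fst).card ≤ S.card := by
  calc 2 * (S.image Prod.fst).card = ∑ _i ∈ S.image Prod.fst, 2 := by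
        rw [Finset.sum_const, smul_eq_mul, mul_comm]
    _ ≤ ∑ i ∈ S.image Prod.fst, (S.filter (fun c => c.1 = i)).card :=
        Finset.sum_le_sum (fun i hi => two_le_fiber_fst hs hi)
    _ = S.card := (Finset.card_eq_sum_card_image Prod.fst S).symm

lemma cols_le (S : Finset (α × β)) (hs : IsStopping S) :
    2 * (S.image Prod.snd).card ≤ S.card := by
  calc 2 * (S.image Prod.snd).card = ∑ _j ∈ S.image Prod.snd, 2 := by
        rw [Finset.sum_const, smul_eq_mul, mul_comm]
    _ ≤ ∑ j ∈ S.image Prod.snd, (S.filter (fun c => c.2 = j)).card :=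
        Finset.sum_le_sum (fun j hj => two_le_fiber_snd hs hj)
    _ = S.card := (Finset.card_eq_sum_card_image Prod.snd S).symm

lemma two_le_rows {S : Finset (α × β)} (hs : IsStopping S) (hne : S.Nonempty) :
    2 ≤ (S.image Prod.fst).card := by
  obtain ⟨c, hc⟩ := hne
  obtain ⟨-, d, hd, hdc, hd2⟩ := hs c hc
  have h1 : d.1 ≠ c.1 := fun h => hdc (Prod.ext_iff.mpr ⟨h, hd2⟩)
  exact Finset.one_lt_card.mpr
    ⟨d.1, mem_image_of_mem _ hd, c.1, mem_image_of_mem _ hc, h1⟩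

lemma two_le_cols {S : Finset (α × β)} (hs : IsStopping S) (hne : S.Nonempty) :
    2 ≤ (S.image Prod.snd).card := by
  obtain ⟨c, hc⟩ := hne
  obtain ⟨⟨d, hd, hdc, hd1⟩, -⟩ := hs c hc
  have h2 : d.2 ≠ c.2 := fun h => hdc (Prod.ext_iff.mpr ⟨hd1, h⟩)
  exact Finset.one_lt_card.mpr
    ⟨d.2, mem_image_of_mem _ hd, c.2, mem_image_of_mem _ hc, h2⟩

lemma full_col {S : Finset (α × β)} (hs : IsStopping S) {i₁ i₂ : α}
    (himg : S.image Prod.fst = {i₁, i₂}) {j : β} (hj : j ∈ S.image Prod.snd) :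
    (i₁, j) ∈ S ∧ (i₂, j) ∈ S := by
  obtain ⟨c, hc, rfl⟩ := mem_image.mp hj
  obtain ⟨-, d, hd, hdc, hd2⟩ := hs c hc
  have h1 : d.1 ≠ c.1 := fun h => hdc (Prod.ext_iff.mpr ⟨h, hd2⟩)
  have hcmem : c.1 ∈ ({i₁, i₂} : Finset α) := himg ▸ mem_image_of_mem _ hc
  have hdmem : d.1 ∈ ({i₁, i₂} : Finset α) := himg ▸ mem_image_of_mem _ hd
  simp only [mem_insert, mem_singleton] at hcmem hdmem
  have hc' : (c.1, c.2) ∈ S := by simpa using hc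
  have hd' : (d.1, c.2) ∈ S := by
    have : (d.1, c.2) = d := by rw [← hd2]
    rw [this]; exact hd
  rcases hcmem with h | h <;> rcases hdmem with h' | h'
  · exact absurd (h'.trans h.symm) h1
  · exact ⟨h ▸ hc', h' ▸ hd'⟩
  · exact ⟨h' ▸ hd', h ▸ hc'⟩
  · exact absurd (h'.trans h.symm) h1

lemma full_row {S : Finset (α × β)} (hs : IsStopping S) {j₁ j₂ : β}
    (himg : S.image Prod.snd = {j₁, j₂}) {i : α} (hi : i ∈ S.image Prod.fst) :
    (i, j₁) ∈ S ∧ (i, j₂) ∈ S := by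
  obtain ⟨c, hc, rfl⟩ := mem_image.mp hi
  obtain ⟨⟨d, hd, hdc, hd1⟩, -⟩ := hs c hc
  have h2 : d.2 ≠ c.2 := fun h => hdc (Prod.ext_iff.mpr ⟨hd1, h⟩)
  have hcmem : c.2 ∈ ({j₁, j₂} : Finset β) := himg ▸ mem_image_of_mem _ hc
  have hdmem : d.2 ∈ ({j₁, j₂} : Finset β) := himg ▸ mem_image_of_mem _ hd
  simp only [mem_insert, mem_singleton] at hcmem hdmem
  have hc' : (c.1, c.2) ∈ S := by simpa using hc
  have hd' : (c.1, d.2) ∈ S := by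
    have : (c.1, d.2) = d := by rw [← hd1]
    rw [this]; exact hd
  rcases hcmem with h | h <;> rcases hdmem with h' | h'
  · exact absurd (h'.trans h.symm) h2
  · exact ⟨h ▸ hc', h' ▸ hd'⟩
  · exact ⟨h' ▸ hd', h ▸ hc'⟩
  · exact absurd (h'.trans h.symm) h2

/-- Every undecodable 6-set either occupies exactly 3 rows and 3 columns,
or contains the four corners of a rectangle. -/
lemma structure6 (E : Finset (α × β)) (hcard : E.card = 6) (h : ¬ PeelDecodable E) :
    ((E.image Prod.fst).card = 3 ∧ (E.image Prod.snd).card = 3) ∨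
    ∃ i₁ i₂ j₁ j₂, i₁ ≠ i₂ ∧ j₁ ≠ j₂ ∧
      (i₁, j₁) ∈ E ∧ (i₁, j₂) ∈ E ∧ (i₂, j₁) ∈ E ∧ (i₂, j₂) ∈ E := by
  obtain ⟨S, hSE, hne, hs⟩ := exists_stopping_s16 E h
  have hS6 : S.card ≤ 6 := hcard ▸ Finset.card_le_card hSE
  have ha2 := two_le_rows hs hne
  have hb2 := two_le_cols hs hne
  have haS := rows_le S hs
  have hbS := cols_le S hs
  by_cases hrow2 : (S.image Prod.fst).card = 2
  · right
    obtain ⟨i₁, i₂, hii, himg⟩ := Finset.card_eq_two.mp hrow2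
    obtain ⟨j₁, hj₁, j₂, hj₂, hjj⟩ := Finset.one_lt_card.mp hb2
    obtain ⟨h11, h21⟩ := full_col hs himg hj₁
    obtain ⟨h12, h22⟩ := full_col hs himg hj₂
    exact ⟨i₁, i₂, j₁, j₂, hii, hjj.symm ∘ Eq.symm, hSE h11, hSE h12, hSE h21, hSE h22⟩
  · by_cases hcol2 : (S.image Prod.snd).card = 2
    · right
      obtain ⟨j₁, j₂, hjj, himg⟩ := Finset.card_eq_two.mp hcol2
      obtain ⟨i₁, hi₁, i₂, hi₂, hii⟩ := Finset.one_lt_card.mp ha2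
      obtain ⟨h11, h12⟩ := full_row hs himg hi₁
      obtain ⟨h21, h22⟩ := full_row hs himg hi₂
      exact ⟨i₁, i₂, j₁, j₂, hii.symm ∘ Eq.symm, hjj, hSE h11, hSE h12, hSE h21, hSE h22⟩
    · left
      have ha3 : (S.image Prod.fst).card = 3 := by omega
      have hb3 : (S.image Prod.snd).card = 3 := by omega
      have hSeq : S = E := Finset.eq_of_subset_of_card_le hSE (by omega)
      rw [← hSeq]
      exact ⟨ha3, hb3⟩

end Stopping

open scoped Classical in
/-- The number of undecodable erasure sets of size 6 in the `(L_A+1) × (L_B+1)` grid,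
with `n = (L_A+1)(L_B+1)`, is at most
`C(L_A+1,3)·C(L_B+1,3)·C(9,6) + C(L_A+1,2)·C(L_B+1,2)·C(n-4,2)`. -/
theorem card_undecodable_six_sets_le (LA LB : ℕ) :
    (Finset.univ.filter
        (fun E : Finset (Fin (LA + 1) × Fin (LB + 1)) =>
          E.card = 6 ∧ ¬ PeelDecodable E)).card ≤
      (LA + 1).choose 3 * (LB + 1).choose 3 * Nat.choose 9 6 +
        (LA + 1).choose 2 * (LB + 1).choose 2 *
          ((LA + 1) * (LB + 1) - 4).choose 2 := by
  classical
  set T1 : Finset (Finset (Fin (LA+1) × Fin (LB+1))) :=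
    ((univ.powersetCard 3) ×ˢ (univ.powersetCard 3)).biUnion
      (fun p => (p.1 ×ˢ p.2).powersetCard 6) with hT1
  set T2 : Finset (Finset (Fin (LA+1) × Fin (LB+1))) :=
    ((univ.powersetCard 2) ×ˢ (univ.powersetCard 2)).biUnion
      (fun p => ((univ \ (p.1 ×ˢ p.2)).powersetCard 2).image
        (fun X => p.1 ×ˢ p.2 ∪ X)) with hT2
  have hsub : (Finset.univ.filter
        (fun E : Finset (Fin (LA + 1) × Fin (LB + 1)) =>
          E.card = 6 ∧ ¬ PeelDecodable E)) ⊆ T1 ∪ T2 := by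
    intro E hE
    rw [mem_filter] at hE
    obtain ⟨-, h6, hund⟩ := hE
    rcases structure6 E h6 hund with ⟨ha, hb⟩ | ⟨i₁, i₂, j₁, j₂, hii, hjj, h11, h12, h21, h22⟩
    · apply mem_union_left
      rw [hT1, mem_biUnion]
      refine ⟨(E.image Prod.fst, E.image Prod.snd), ?_, ?_⟩
      · rw [mem_product]
        exact ⟨mem_powersetCard.mpr ⟨subset_univ _, ha⟩,
               mem_powersetCard.mpr ⟨subset_univ _, hb⟩⟩
      · rw [mem_powersetCard]
        refine ⟨fun c hc => ?_, h6⟩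
        rw [mem_product]
        exact ⟨mem_image_of_mem _ hc, mem_image_of_mem _ hc⟩
    · apply mem_union_right
      rw [hT2, mem_biUnion]
      have hrect : ({i₁, i₂} : Finset (Fin (LA+1))) ×ˢ ({j₁, j₂} : Finset (Fin (LB+1))) ⊆ E := by
        intro c hc
        rw [mem_product] at hc
        simp only [mem_insert, mem_singleton] at hc
        obtain ⟨h1 | h1, h2 | h2⟩ := hc <;>
          · have : c = (c.1, c.2) := rfl
            rw [this, h1, h2]; assumption
      have hrcard : (({i₁, i₂} : Finset (Fin (LA+1))) ×ˢ
          ({j₁, j₂} : Finset (Fin (LB+1)))).card = 4 := by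
        rw [card_product, card_pair hii, card_pair hjj]
      refine ⟨({i₁, i₂}, {j₁, j₂}), ?_, ?_⟩
      · rw [mem_product]
        exact ⟨mem_powersetCard.mpr ⟨subset_univ _, card_pair hii⟩,
               mem_powersetCard.mpr ⟨subset_univ _, card_pair hjj⟩⟩
      · rw [mem_image]
        refine ⟨E \ ({i₁, i₂} ×ˢ {j₁, j₂}), ?_, Finset.union_sdiff_of_subset hrect⟩
        rw [mem_powersetCard]
        constructor
        · intro c hc
          rw [mem_sdiff] at hc ⊢
          exact ⟨mem_univ _, hc.2⟩
        · rw [card_sdiff_of_subset hrect, h6, hrcard]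
  have hcard9 : ∀ p ∈ (univ.powersetCard 3 : Finset (Finset (Fin (LA+1)))) ×ˢ
      (univ.powersetCard 3 : Finset (Finset (Fin (LB+1)))),
      ((p.1 ×ˢ p.2).powersetCard 6).card = Nat.choose 9 6 := by
    intro p hp
    rw [mem_product, mem_powersetCard, mem_powersetCard] at hp
    rw [card_powersetCard, card_product, hp.1.2, hp.2.2]
  have hT1card : T1.card ≤ (LA + 1).choose 3 * (LB + 1).choose 3 * Nat.choose 9 6 := by
    refine le_trans (card_biUnion_le) ?_
    rw [Finset.sum_congr rfl hcard9, Finset.sum_const, smul_eq_mul, card_product,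
      card_powersetCard, card_powersetCard, card_univ, card_univ,
      Fintype.card_fin, Fintype.card_fin]
  have hcardn : ∀ p ∈ (univ.powersetCard 2 : Finset (Finset (Fin (LA+1)))) ×ˢ
      (univ.powersetCard 2 : Finset (Finset (Fin (LB+1)))),
      (((univ \ (p.1 ×ˢ p.2)).powersetCard 2).image
        (fun X => p.1 ×ˢ p.2 ∪ X)).card ≤ ((LA + 1) * (LB + 1) - 4).choose 2 := by
    intro p hp
    rw [mem_product, mem_powersetCard, mem_powersetCard] at hp
    refine le_trans (Finset.card_image_le) ?_
    rw [card_powersetCard, card_sdiff_of_subset (subset_univ _), card_product, hp.1.2, hp.2.2,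
      card_univ, Fintype.card_prod, Fintype.card_fin, Fintype.card_fin]
  have hT2card : T2.card ≤ (LA + 1).choose 2 * (LB + 1).choose 2 *
      ((LA + 1) * (LB + 1) - 4).choose 2 := by
    refine le_trans (card_biUnion_le) ?_
    refine le_trans (Finset.sum_le_sum hcardn) ?_
    rw [Finset.sum_const, smul_eq_mul, card_product,
      card_powersetCard, card_powersetCard, card_univ, card_univ,
      Fintype.card_fin, Fintype.card_fin]
  calc (Finset.univ.filter _).card ≤ (T1 ∪ T2).card := card_le_card hsub
    _ ≤ T1.card + T2.card := card_union_le _ _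
    _ ≤ _ := Nat.add_le_add hT1card hT2card
end
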